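/- arXiv:2108.09115 — 3 statements merged into one kernel-verified Lean document; each statement's English description precedes it below -/
import Mathlib

section
/- For any strings A, B of length n over Σ and any monotone mapping μ from the windows of A to the windows of B (or ⊥), the window cost ED(μ) is an upper bound on the true edit distance: ED(μ) ≥ ED(A,B). -/
/-- Costs of edit operations (formerly `Levenshtein.Cost` in Mathlib). -/
structure Levenshtein.Cost (α β δ : Type*) where
  delete : α → δ
  insert : β → δ
  substitute : α → β → δ

/-- Unit costs (formerly `Levenshtein.defaultCost` in Mathlib). -/
def Levenshtein.defaultCost {α : Type*} [DecidableEq α] : Levenshtein.Cost α α ℕ where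
  delete _ := 1
  insert _ := 1
  substitute a b := if a = b then 0 else 1

/-- Levenshtein distance (formerly `levenshtein` in Mathlib), by its defining recursion. -/
def levenshtein {α β δ : Type*} [AddZeroClass δ] [Min δ] (C : Levenshtein.Cost α β δ) :
    List α → List β → δ
  | [], [] => 0
  | [], y :: ys => C.insert y + levenshtein C [] ys
  | x :: xs, [] => C.delete x + levenshtein C xs []
  | x :: xs, y :: ys =>
    min (C.delete x + levenshtein C xs (y :: ys))
      (min (C.insert y + levenshtein C (x :: xs) ys) (C.substitute x y + levenshtein C xs ys))

/-- Levenshtein edit distance with unit costs. -/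
def ED {α : Type*} [DecidableEq α] (x y : List α) : ℕ :=
  levenshtein Levenshtein.defaultCost x y

/-- The window of `B` with start index `s` (0-indexed) and length `l`. -/
def window {α : Type*} (B : List α) (s l : ℕ) : List α := (B.drop s).take l

/-!
Let `B'` be the concatenation of the windows `μ(a)` (with `⊥` contributing nothing). Edit
distance is subadditive under concatenation, so `ED(A, B') ≤ Σ_a ED(a, μ(a))`. The letters of
`B` at covered positions, i.e. positions lying in some `μ(a)`, form a subsequence `z` of `B`, and,
because window starts are nondecreasing, also a subsequence of `B'`. Hence
`ED(B', B) ≤ |B'| + |B| - 2|z|`, and with `c_i = #{a : i ∈ μ(a)}` one has `|B'| = Σ_i c_i` and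
`|z| = #{i : c_i > 0}`, so this bound is exactly `Σ_i |c_i - 1|`. The triangle inequality
`ED(A, B) ≤ ED(A, B') + ED(B', B)` finishes the proof.
-/

section EditDistance

variable {α : Type*} [DecidableEq α]

@[simp] theorem ED_nil_left (y : List α) : ED [] y = y.length := by
  induction y with
  | nil => simp [ED, levenshtein]
  | cons b y ih =>
    have : ED [] (b :: y) = 1 + ED [] y := by simp only [ED, levenshtein]; rfl
    simp [this, ih, Nat.add_comm]

@[simp] theorem ED_nil_right (x : List α) : ED x [] = x.length := by
  induction x with
  | nil => simp [ED, levenshtein]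
  | cons a x ih =>
    have : ED (a :: x) [] = 1 + ED x [] := by simp only [ED, levenshtein]; rfl
    simp [this, ih, Nat.add_comm]

theorem ED_cons_cons (a b : α) (x y : List α) :
    ED (a :: x) (b :: y) =
      min (1 + ED x (b :: y)) (min (1 + ED (a :: x) y) ((if a = b then 0 else 1) + ED x y)) := by
  simp only [ED, levenshtein, Levenshtein.defaultCost]

theorem ED_comm : ∀ x y : List α, ED x y = ED y x
  | [], y => by simp
  | x, [] => by simp
  | a :: x, b :: y => by
    rw [ED_cons_cons, ED_cons_cons, ED_comm x (b :: y), ED_comm (a :: x) y, ED_comm x y]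
    simp only [eq_comm (a := a)]
    omega
  termination_by x y => x.length + y.length

theorem ED_cons_left_le (a : α) (x y : List α) : ED (a :: x) y ≤ 1 + ED x y := by
  cases y with
  | nil => simp
  | cons b y => rw [ED_cons_cons]; omega

theorem ED_cons_right_le (b : α) (x y : List α) : ED x (b :: y) ≤ 1 + ED x y := by
  rw [ED_comm, ED_comm x]; exact ED_cons_left_le b y x

theorem ED_cons_cons_le (a b : α) (x y : List α) :
    ED (a :: x) (b :: y) ≤ (if a = b then 0 else 1) + ED x y := by
  rw [ED_cons_cons]; omega

theorem length_le_length_add_ED : ∀ x y : List α, y.length ≤ x.length + ED x y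
  | [], y => by simp
  | a :: x, [] => by simp
  | a :: x, b :: y => by
    have h₁ := length_le_length_add_ED x (b :: y)
    have h₂ := length_le_length_add_ED (a :: x) y
    have h₃ := length_le_length_add_ED x y
    rw [ED_cons_cons]
    simp only [List.length_cons] at *
    omega
  termination_by x y => x.length + y.length

theorem ED_le_length_add_length : ∀ x y : List α, ED x y ≤ x.length + y.length
  | [], y => by simp
  | a :: x, [] => by simp
  | a :: x, b :: y => by
    have ih := ED_le_length_add_length x y
    have h := ED_cons_cons_le a b x y
    simp only [List.length_cons]
    split_ifs at h <;> omega

theorem ED_triangle : ∀ x y z : List α, ED x z ≤ ED x y + ED y z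
  | [], y, z => by simpa using length_le_length_add_ED y z
  | x, y, [] => by simpa [ED_comm x y, Nat.add_comm] using length_le_length_add_ED y x
  | a :: x, [], c :: z => by simpa using ED_le_length_add_length (a :: x) (c :: z)
  | a :: x, b :: y, c :: z => by
    have h₁ := ED_cons_left_le a x (c :: z)
    have h₂ := ED_cons_right_le c (a :: x) z
    have h₃ := ED_cons_cons_le a c x z
    have e₁ := ED_cons_cons a b x y
    have e₂ := ED_cons_cons b c y z
    have i₁ := ED_triangle x (b :: y) (c :: z)
    have i₂ := ED_triangle (a :: x) y (c :: z)
    have i₃ := ED_triangle (a :: x) (b :: y) z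
    have i₄ := ED_triangle (a :: x) y z
    have i₅ := ED_triangle x y (c :: z)
    have i₆ := ED_triangle x y z
    have hsub :
        (if a = c then 0 else 1) ≤ (if a = b then 0 else 1) + (if b = c then 0 else 1) := by
      split_ifs <;> simp_all
    -- each of the nine pairs of choices for `ED (a :: x) (b :: y)` and `ED (b :: y) (c :: z)`
    -- is matched by one of the six inductive bounds
    omega
  termination_by x y z => x.length + y.length + z.length

theorem ED_append_le : ∀ x₁ y₁ x₂ y₂ : List α,
    ED (x₁ ++ x₂) (y₁ ++ y₂) ≤ ED x₁ y₁ + ED x₂ y₂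
  | [], [], x₂, y₂ => by simp
  | [], b :: y₁, x₂, y₂ => by
    have ih := ED_append_le [] y₁ x₂ y₂
    have h := ED_cons_right_le b x₂ (y₁ ++ y₂)
    simp only [ED_nil_left, List.nil_append, List.cons_append, List.length_cons] at *
    omega
  | a :: x₁, [], x₂, y₂ => by
    have ih := ED_append_le x₁ [] x₂ y₂
    have h := ED_cons_left_le a (x₁ ++ x₂) y₂
    simp only [ED_nil_right, List.nil_append, List.cons_append, List.length_cons] at *
    omega
  | a :: x₁, b :: y₁, x₂, y₂ => by
    have ih₁ := ED_append_le x₁ (b :: y₁) x₂ y₂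
    have ih₂ := ED_append_le (a :: x₁) y₁ x₂ y₂
    have ih₃ := ED_append_le x₁ y₁ x₂ y₂
    have e := ED_cons_cons a b x₁ y₁
    have g₁ := ED_cons_left_le a (x₁ ++ x₂) (b :: y₁ ++ y₂)
    have g₂ := ED_cons_right_le b (a :: x₁ ++ x₂) (y₁ ++ y₂)
    have g₃ := ED_cons_cons_le a b (x₁ ++ x₂) (y₁ ++ y₂)
    simp only [List.cons_append] at *
    omega
  termination_by x₁ y₁ _ _ => x₁.length + y₁.length

theorem ED_flatten_ofFn_le : ∀ {m : ℕ} (f g : Fin m → List α),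
    ED (List.ofFn f).flatten (List.ofFn g).flatten ≤ ∑ j, ED (f j) (g j)
  | 0, _, _ => by simp
  | _ + 1, f, g => by
    simp only [List.ofFn_succ, List.flatten_cons, Fin.sum_univ_succ]
    exact (ED_append_le _ _ _ _).trans (Nat.add_le_add_left (ED_flatten_ofFn_le _ _) _)

theorem List.Sublist.ED_add_length_le {z y : List α} (h : z.Sublist y) :
    ED z y + z.length ≤ y.length := by
  induction h with
  | slnil => simp
  | @cons l₁ l₂ a _ ih =>
    have := ED_cons_right_le a l₁ l₂
    simp only [List.length_cons]
    omega
  | @cons_cons l₁ l₂ a _ ih =>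
    have := ED_cons_cons_le a a l₁ l₂
    rw [if_pos rfl, Nat.zero_add] at this
    simp only [List.length_cons]
    omega

theorem ED_add_two_mul_length_le_of_sublist {x y z : List α} (hx : z.Sublist x)
    (hy : z.Sublist y) : ED x y + 2 * z.length ≤ x.length + y.length := by
  have := ED_triangle x z y
  have := hx.ED_add_length_le
  have := hy.ED_add_length_le
  rw [ED_comm z x] at *
  omega

end EditDistance

namespace List

variable {α : Type*}

def filterIdx (p : ℕ → Bool) : List α → List α
  | [] => []
  | a :: l =>
    if p 0 then a :: filterIdx (fun i => p (i + 1)) l else filterIdx (fun i => p (i + 1)) l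

@[simp] theorem filterIdx_nil (p : ℕ → Bool) : filterIdx p ([] : List α) = [] := rfl

theorem filterIdx_cons (p : ℕ → Bool) (a : α) (l : List α) :
    filterIdx p (a :: l) =
      if p 0 then a :: filterIdx (fun i => p (i + 1)) l else filterIdx (fun i => p (i + 1)) l :=
  rfl

theorem filterIdx_sublist (p : ℕ → Bool) (l : List α) : (filterIdx p l).Sublist l := by
  induction l generalizing p with
  | nil => simp
  | cons a l ih => rw [filterIdx_cons]; split <;> simp [ih]

theorem filterIdx_congr {p q : ℕ → Bool} {l : List α} (h : ∀ i < l.length, p i = q i) :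
    filterIdx p l = filterIdx q l := by
  induction l generalizing p q with
  | nil => rfl
  | cons a l ih =>
    simp only [filterIdx_cons, h 0 (by simp),
      ih fun i hi => h (i + 1) (by simpa using hi)]

theorem filterIdx_append (p : ℕ → Bool) (l₁ l₂ : List α) :
    filterIdx p (l₁ ++ l₂) =
      filterIdx p l₁ ++ filterIdx (fun i => p (i + l₁.length)) l₂ := by
  induction l₁ generalizing p with
  | nil => simp
  | cons a l ih =>
    rw [cons_append, filterIdx_cons, filterIdx_cons, ih]
    split <;> simp [Nat.add_assoc]

theorem length_filterIdx (p : ℕ → Bool) (l : List α) :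
    (filterIdx p l).length = ((Finset.range l.length).filter (fun i => p i)).card := by
  induction l generalizing p with
  | nil => simp
  | cons a l ih =>
    rw [filterIdx_cons, Finset.card_filter, length_cons, Finset.sum_range_succ',
      ← Finset.card_filter, ← ih]
    split <;> simp_all

@[simp] theorem filterIdx_false (l : List α) : filterIdx (fun _ => false) l = [] := by
  induction l with
  | nil => rfl
  | cons a l ih => simpa [filterIdx_cons] using ih

theorem filterIdx_lt (k : ℕ) (l : List α) :
    filterIdx (fun i => decide (i < k)) l = l.take k := by
  induction l generalizing k with
  | nil => simp
  | cons a l ih => cases k <;> simp [filterIdx_cons, ih]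

theorem filterIdx_mem_Ico (s k : ℕ) (l : List α) :
    filterIdx (fun i => decide (s ≤ i ∧ i < s + k)) l = (l.drop s).take k := by
  induction l generalizing s with
  | nil => simp
  | cons a l ih =>
    cases s with
    | zero => simpa using filterIdx_lt k (a :: l)
    | succ s => simpa [filterIdx_cons, Nat.add_right_comm] using ih s

end List

section Windows

open Finset

variable {α : Type*}

def covers (o : Option (ℕ × ℕ)) (i : ℕ) : Bool :=
  o.elim false fun p => decide (p.1 ≤ i ∧ i < p.1 + p.2)

def optWindow (B : List α) (o : Option (ℕ × ℕ)) : List α :=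
  o.elim [] fun p => window B p.1 p.2

def windowConcat (B : List α) {m : ℕ} (μ : Fin m → Option (ℕ × ℕ)) : List α :=
  (List.ofFn fun j => optWindow B (μ j)).flatten

theorem filterIdx_covers (B : List α) (o : Option (ℕ × ℕ)) :
    B.filterIdx (covers o) = optWindow B o := by
  cases o with
  | none => exact List.filterIdx_false B
  | some p => exact List.filterIdx_mem_Ico p.1 p.2 B

theorem sum_card_covers (B : List α) {m : ℕ} (μ : Fin m → Option (ℕ × ℕ)) :
    ∑ i ∈ range B.length, #{j | covers (μ j) i} = (windowConcat B μ).length := by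
  simp only [card_filter]
  rw [sum_comm, windowConcat, List.length_flatten, List.map_ofFn, List.sum_ofFn]
  refine sum_congr rfl fun j _ => ?_
  rw [← card_filter, ← List.length_filterIdx, filterIdx_covers]
  rfl

/-- Positions covered by later windows but lying before the end of the first window are already
inside the first window, since later windows start no earlier; so the covered positions of `B`
split as the first window followed by covered positions beyond it. -/
theorem filterIdx_any_covers_sublist (B : List α) : ∀ L : List (Option (ℕ × ℕ)),
    L.Pairwise (fun o o' => ∀ p ∈ o, ∀ p' ∈ o', p.1 ≤ p'.1) →
    (B.filterIdx fun i => L.any (covers · i)).Sublist (L.map (optWindow B)).flatten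
  | [], _ => by simp
  | none :: L, h => by
    simpa [covers, optWindow] using filterIdx_any_covers_sublist B L (List.pairwise_cons.1 h).2
  | some (s, l) :: L, h => by
    obtain ⟨hstart, hL⟩ := List.pairwise_cons.1 h
    have hle : ∀ i, L.any (covers · i) = true → s ≤ i := by
      intro i hi
      obtain ⟨o, ho, hoi⟩ := List.any_eq_true.1 hi
      cases o with
      | none => simp [covers] at hoi
      | some p =>
        have := hstart _ ho (s, l) rfl p rfl
        simp only [covers, Option.elim, decide_eq_true_eq] at hoi
        omega
    have hhead : (B.take (s + l)).filterIdx (fun i => (some (s, l) :: L).any (covers · i)) =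
        optWindow B (some (s, l)) := by
      rw [List.filterIdx_congr (q := fun i => decide (s ≤ i ∧ i < s + l)),
        List.filterIdx_mem_Ico, List.drop_take, List.take_take]
      · simp [optWindow, window]
      intro i hi
      have hi' : i < s + l := lt_of_lt_of_le hi (by simp)
      rw [List.any_cons]
      cases h : L.any (covers · i)
      · simp [covers]
      · simp [hle i h, hi']
    have htail : (B.drop (s + l)).filterIdx
        (fun i => (some (s, l) :: L).any (covers · (i + (B.take (s + l)).length))) =
        (B.drop (s + l)).filterIdx (fun i => L.any (covers · (i + (B.take (s + l)).length))) := by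
      refine List.filterIdx_congr fun i hi => ?_
      simp only [List.length_drop, List.length_take] at hi ⊢
      simp [covers]
      omega
    conv_lhs => rw [← List.take_append_drop (s + l) B, List.filterIdx_append]
    rw [List.map_cons, List.flatten_cons, hhead, htail]
    refine List.Sublist.append_left (List.Sublist.trans ?_ (filterIdx_any_covers_sublist B L hL)) _
    conv_rhs => rw [← List.take_append_drop (s + l) B, List.filterIdx_append]
    exact List.sublist_append_right _ _

/-- The covered positions of `B` form a common subsequence of `B` and `windowConcat B μ`. -/
theorem ED_windowConcat_add_two_mul_card_le [DecidableEq α] (B : List α) {m : ℕ}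
    (μ : Fin m → Option (ℕ × ℕ))
    (hμ : ∀ i j, i < j → ∀ p ∈ μ i, ∀ p' ∈ μ j, p.1 ≤ p'.1) :
    ED (windowConcat B μ) B + 2 * #{i ∈ range B.length | 0 < #{j | covers (μ j) i}} ≤
      (windowConcat B μ).length + B.length := by
  have hcovered : #{i ∈ range B.length | 0 < #{j | covers (μ j) i}} =
      (B.filterIdx fun i => (List.ofFn μ).any (covers · i)).length := by
    rw [List.length_filterIdx]
    refine congrArg card (filter_congr fun i _ => ?_)
    simp [List.any_eq_true, card_pos, filter_nonempty_iff]
  rw [hcovered]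
  refine ED_add_two_mul_length_le_of_sublist ?_ (List.filterIdx_sublist _ _)
  have h := filterIdx_any_covers_sublist B _ (List.pairwise_ofFn.2 hμ)
  rwa [List.map_ofFn] at h

end Windows

open Finset in
theorem sum_abs_natCast_sub_one {ι : Type*} (s : Finset ι) (c : ι → ℕ) :
    ∑ i ∈ s, |(c i : ℤ) - 1| = ∑ i ∈ s, (c i : ℤ) + #s - 2 * #{i ∈ s | 0 < c i} := by
  rw [card_filter, card_eq_sum_ones]
  push_cast
  rw [mul_sum, ← sum_add_distrib, ← sum_sub_distrib]
  refine sum_congr rfl fun i _ => ?_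
  split_ifs with h
  · rw [abs_of_nonneg (by omega)]; ring
  · rw [Nat.eq_zero_of_not_pos h]; norm_num

/-- `𝒜` lists the windows of `A` in order, a window of `B` is a pair (start, length) read through
`window`, and `⊥` is `none`. -/
theorem stmt_8_general {α : Type*} [DecidableEq α] (A B : List α)
    (𝒜 : List (List α)) (h𝒜 : 𝒜.flatten = A)
    (μ : Fin 𝒜.length → Option (ℕ × ℕ))
    (hmono : ∀ i j : Fin 𝒜.length, i ≤ j →
      ∀ s l s' l', μ i = some (s, l) → μ j = some (s', l') →
        s ≤ s' ∧ s + l ≤ s' + l') :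
    (ED A B : ℤ) ≤
      (∑ i : Fin 𝒜.length,
        (Option.elim (μ i) ((𝒜.get i).length : ℤ)
          (fun p => (ED (𝒜.get i) (window B p.1 p.2) : ℤ)))) +
      ∑ i ∈ Finset.range B.length,
        |((Finset.univ.filter (fun j : Fin 𝒜.length =>
            (Option.elim (μ j) false
              (fun p => decide (p.1 ≤ i ∧ i < p.1 + p.2))) = true)).card : ℤ) - 1| := by
  have hcost (j) : Option.elim (μ j) ((𝒜.get j).length : ℤ)
      (fun p => (ED (𝒜.get j) (window B p.1 p.2) : ℤ)) =
        ED (𝒜.get j) (optWindow B (μ j)) := by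
    cases μ j <;> simp [optWindow]
  rw [Finset.sum_congr rfl fun j _ => hcost j, ← Nat.cast_sum]
  change _ ≤ _ + ∑ i ∈ Finset.range B.length,
    |((Finset.univ.filter fun j => covers (μ j) i).card : ℤ) - 1|
  rw [sum_abs_natCast_sub_one, ← Nat.cast_sum, sum_card_covers, Finset.card_range]
  have hA : ED A (windowConcat B μ) ≤ ∑ j, ED (𝒜.get j) (optWindow B (μ j)) := by
    have h := ED_flatten_ofFn_le 𝒜.get fun j => optWindow B (μ j)
    rwa [List.ofFn_get, h𝒜] at h
  have hB := ED_windowConcat_add_two_mul_card_le B μ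
    fun i j hij p hp p' hp' => (hmono i j hij.le p.1 p.2 p'.1 p'.2 hp hp').1
  have := ED_triangle A (windowConcat B μ) B
  omega

/-- For strings `A, B`, a partition of `A` into an ordered list of
contiguous windows `𝒜` (so `𝒜.flatten = A`), and a monotone mapping `μ` from
`𝒜`-windows to windows of `B` (given as start/length pairs) or `⊥ = none`,
the window cost
`ED(μ) = Σ_a ED(a, μ(a)) + Σ_{i<|B|} |#{a : i ∈ μ(a)} − 1|`
(with `ED(a,⊥) = |a|`, the window width) is an upper bound on the true edit
distance: `ED(μ) ≥ ED(A,B)`. -/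
theorem stmt_8 {α : Type*} [DecidableEq α] (A B : List α)
    (𝒜 : List (List α)) (h𝒜 : 𝒜.flatten = A)
    (μ : Fin 𝒜.length → Option (ℕ × ℕ))
    (hwin : ∀ (i : Fin 𝒜.length) (s l : ℕ), μ i = some (s, l) → s + l ≤ B.length)
    (hmono : ∀ i j : Fin 𝒜.length, i ≤ j →
      ∀ s l s' l', μ i = some (s, l) → μ j = some (s', l') →
        s ≤ s' ∧ s + l ≤ s' + l') :
    (ED A B : ℤ) ≤
      (∑ i : Fin 𝒜.length,
        (Option.elim (μ i) ((𝒜.get i).length : ℤ)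
          (fun p => (ED (𝒜.get i) (window B p.1 p.2) : ℤ)))) +
      ∑ i ∈ Finset.range B.length,
        |((Finset.univ.filter (fun j : Fin 𝒜.length =>
            (Option.elim (μ j) false
              (fun p => decide (p.1 ≤ i ∧ i < p.1 + p.2))) = true)).card : ℤ) - 1| :=
  stmt_8_general A B 𝒜 h𝒜 μ hmono
end

section
/- Any common subsequence of two permutations X, Y of {1,...,n} that consists of elements forming c blocks contiguous in both X and Y and appearing in the same relative order corresponds to an increasing sequence in the permutation π = Y∘X^{-1} restricted to block representatives; conversely, the heaviest increasing subsequence (with block-length weights) over the c blocks gives the longest common subsequence of X and Y among block-respecting subsequences. -/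
/-!
A concatenation of blocks is a subsequence of the duplicate-free word `Y` exactly when the
occurrences of the blocks in `Y` start in increasing order. If it is a subsequence, the first
letters of any two of its blocks form a two-letter subsequence of `Y`, which in a word without
repetitions fixes the order of their positions. Conversely, the blocks are disjoint, being
disjoint pieces of the permutation `X`, so two occurrences starting in order cannot overlap, and
slices of `Y` that are in order and do not overlap concatenate to a subsequence of `Y`.
-/

namespace List

variable {α ι : Type*}

theorem Pairwise.pairwise_get {R : α → α → Prop} (hR : ∀ {a b}, R a b → R b a)
    {l : List α} (h : l.Pairwise R) : _root_.Pairwise fun a b => R (l.get a) (l.get b) := by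
  intro a b hab
  rcases hab.lt_or_gt with hlt | hlt
  · exact h.rel_get_of_lt hlt
  · exact hR (h.rel_get_of_lt hlt)

theorem Nodup.lt_of_pair_sublist {L : List α} (hL : L.Nodup) {i j : ℕ} {x y : α}
    (hi : L[i]? = some x) (hj : L[j]? = some y) (h : [x, y] <+ L) : i < j := by
  obtain ⟨f, hf⟩ := sublist_iff_exists_fin_orderEmbedding_get_eq.mp h
  have hf0 : L[(f 0 : ℕ)]? = some x := by simpa using (hf 0).symm
  have hf1 : L[(f 1 : ℕ)]? = some y := by simpa using (hf 1).symm
  rw [← (getElem?_inj (f 0).isLt hL).mp (hf0.trans hi.symm),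
    ← (getElem?_inj (f 1).isLt hL).mp (hf1.trans hj.symm)]
  exact f.lt_iff_lt.mpr (by simp)

section Occurrence

variable {L s t : List α} {q r : ℕ}

theorem getElem?_add_of_take_drop_eq (hs : (L.drop q).take s.length = s) {k : ℕ}
    (hk : k < s.length) : L[q + k]? = some s[k] := by
  have := congrArg (·[k]?) hs
  simpa [hk] using this

theorem add_length_le_of_disjoint (hs : (L.drop q).take s.length = s)
    (ht : (L.drop r).take t.length = t) (ht0 : t ≠ []) (hst : s.Disjoint t) (hqr : q ≤ r) :
    q + s.length ≤ r := by
  by_contra! hrs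
  have hs' := getElem?_add_of_take_drop_eq hs (k := r - q) (by omega)
  have ht' := getElem?_add_of_take_drop_eq ht (length_pos_iff.mpr ht0)
  rw [Nat.add_sub_cancel' hqr] at hs'
  rw [Nat.add_zero, hs', Option.some_inj] at ht'
  exact hst (ht' ▸ getElem_mem _) (getElem_mem _)

end Occurrence

section Blocks

variable {L : List α} {B : ι → List α} {p : ι → ℕ}

theorem flatten_map_sublist_drop (hocc : ∀ j, (L.drop (p j)).take (B j).length = B j)
    {js : List ι} (hjs : js.Pairwise fun a b => p a + (B a).length ≤ p b) {m : ℕ}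
    (hm : ∀ j ∈ js, m ≤ p j) : (js.map B).flatten <+ L.drop m := by
  induction js generalizing m with
  | nil => simp
  | cons j js ih =>
    rw [pairwise_cons] at hjs
    have hsplit : B j ++ L.drop (p j + (B j).length) = L.drop (p j) := by
      have := take_append_drop (B j).length (L.drop (p j))
      rwa [hocc j, drop_drop] at this
    calc ((j :: js).map B).flatten = B j ++ (js.map B).flatten := rfl
      _ <+ B j ++ L.drop (p j + (B j).length) := (ih hjs.2 hjs.1).append_left _
      _ = L.drop (p j) := hsplit
      _ <+ L.drop m := drop_sublist_drop_left _ (hm j mem_cons_self)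

theorem Nodup.pairwise_lt_of_flatten_map_sublist (hL : L.Nodup)
    (hocc : ∀ j, (L.drop (p j)).take (B j).length = B j) (hne : ∀ j, B j ≠ [])
    {js : List ι} (h : (js.map B).flatten <+ L) : js.Pairwise fun a b => p a < p b := by
  refine pairwise_of_forall_sublist fun {a b} hab => ?_
  have hpos : ∀ j, 0 < (B j).length := fun j => length_pos_iff.mpr (hne j)
  have hhead : ∀ j, L[p j]? = some ((B j)[0]'(hpos j)) := fun j => by
    simpa using getElem?_add_of_take_drop_eq (hocc j) (hpos j)
  have hpair : [(B a)[0]'(hpos a), (B b)[0]'(hpos b)] <+ B a ++ B b :=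
    (singleton_sublist.mpr (getElem_mem _)).append (singleton_sublist.mpr (getElem_mem _))
  have hab' : B a ++ B b <+ (js.map B).flatten := by simpa using (hab.map B).flatten
  exact hL.lt_of_pair_sublist (hhead a) (hhead b) (hpair.trans (hab'.trans h))

theorem flatten_map_sublist_iff_pairwise (hL : L.Nodup)
    (hocc : ∀ j, (L.drop (p j)).take (B j).length = B j) (hne : ∀ j, B j ≠ [])
    (hdisj : _root_.Pairwise fun a b => (B a).Disjoint (B b)) {js : List ι} :
    (js.map B).flatten <+ L ↔ js.Pairwise fun a b => p a < p b := by
  refine ⟨hL.pairwise_lt_of_flatten_map_sublist hocc hne, fun hjs => ?_⟩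
  have hsep : js.Pairwise fun a b => p a + (B a).length ≤ p b :=
    hjs.imp fun {a b} hab => add_length_le_of_disjoint (hocc a) (hocc b) (hne b)
      (hdisj (fun h => (h ▸ hab).false)) hab.le
  simpa using flatten_map_sublist_drop hocc hsep (m := 0) (fun _ _ => Nat.zero_le _)

end Blocks

end List

theorem Finset.pairwise_sort_iff_strictMonoOn {ι β : Type*} [LinearOrder ι] [Preorder β]
    {f : ι → β} {J : Finset ι} :
    (J.sort (· ≤ ·)).Pairwise (fun a b => f a < f b) ↔ StrictMonoOn f J := by
  refine ⟨fun h a ha b hb hab => h.forall_sublist ?_, fun hf => ?_⟩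
  · refine List.sublist_of_subperm_of_sortedLE ?_ ?_ (J.sortedLT_sort.sortedLE)
    · exact List.subperm_of_subset (by simp [hab.ne])
        (by simp [Finset.mem_coe.mp ha, Finset.mem_coe.mp hb])
    · simp [List.sortedLE_iff_pairwise, hab.le]
  · exact J.sortedLT_sort.pairwise.imp_of_mem fun ha hb hab =>
      hf ((mem_sort _).mp ha) ((mem_sort _).mp hb) hab

/-- Let `X, Y` be permutations of `{1,...,n}` (as the lists
`List.ofFn X`, `List.ofFn Y`), and suppose the positions of `X` are
partitioned into contiguous nonempty blocks `Bl` (so `Bl.flatten = X` as a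
list), each of which occurs contiguously in `Y` starting at position `p j`.
Then for every subset `J` of blocks, the concatenation (in `X`-order) of the
blocks of `J` is a common subsequence of `X` and `Y` of length
`Σ_{j∈J} w_j` (where `w_j = |B_j|`) if and only if the starting positions
`p j` are strictly increasing on `J`; it is always a subsequence of `X` with
that length, so the maximum block-respecting common-subsequence length is the
maximum weight of an increasing subsequence of `(p_j, w_j)_j`. -/
theorem stmt_18 (n : ℕ) (X Y : Equiv.Perm (Fin n))
    (Bl : List (List (Fin n))) (hjoin : Bl.flatten = List.ofFn X)
    (hne : ∀ b ∈ Bl, b ≠ [])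
    (p : Fin Bl.length → ℕ)
    (hocc : ∀ j : Fin Bl.length,
      ((List.ofFn Y).drop (p j)).take (Bl.get j).length = Bl.get j) :
    ∀ J : Finset (Fin Bl.length),
      ((((J.sort (· ≤ ·)).map (fun j => Bl.get j)).flatten.Sublist (List.ofFn Y))
          ↔ StrictMonoOn (fun j => p j) ↑J) ∧
      ((J.sort (· ≤ ·)).map (fun j => Bl.get j)).flatten.Sublist (List.ofFn X) ∧
      ((J.sort (· ≤ ·)).map (fun j => Bl.get j)).flatten.length
        = ∑ j ∈ J, (Bl.get j).length := by
  intro J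
  have hY : (List.ofFn Y).Nodup := List.nodup_ofFn.mpr Y.injective
  have hdisj : Pairwise fun a b => (Bl.get a).Disjoint (Bl.get b) := by
    have hX : Bl.flatten.Nodup := hjoin ▸ List.nodup_ofFn.mpr X.injective
    exact (List.nodup_flatten.mp hX).2.pairwise_get List.Disjoint.symm
  refine ⟨?_, ?_, ?_⟩
  · rw [List.flatten_map_sublist_iff_pairwise hY hocc (fun j => hne _ (List.get_mem _ _)) hdisj]
    exact Finset.pairwise_sort_iff_strictMonoOn
  · rw [← hjoin]
    exact (List.map_getElem_sublist J.sortedLT_sort.pairwise).flatten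
  · rw [List.length_flatten, List.map_map, Finset.sum, ← Finset.sort_eq J (· ≤ ·),
      Multiset.map_coe, Multiset.sum_coe]
    rfl
end

section
/- In the heaviest increasing subsequence problem, the set of Pareto-optimal states is an antichain and invariant under the algorithm's updates: if we maintain a set P of pairs (y, w) such that no pair dominates another (y ≤ y' and w ≥ w' implies (y,w) = (y',w')), then after inserting a new pair (y*, w*) with w* = w_prev + weight where w_prev is the largest weight among pairs with y < y*, and deleting all pairs (y', w') with y' > y* and w' ≤ w*, the set P remains an antichain and max weight in P equals the maximum weight of an increasing subsequence of the items processed so far. -/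
/-- `Ach items y w`: some increasing subsequence of the processed items
(pairs `(y-value, weight)`) ends at a `y`-value at most `y` and has total
weight `w`.  (The empty subsequence achieves `(0, 0)`, matching the seed.) -/
def Ach (items : List (ℕ × ℕ)) (y w : ℕ) : Prop :=
  ∃ l : List (ℕ × ℕ), l.Sublist items ∧ l.Chain' (fun a b => a.1 < b.1) ∧
    (l.map Prod.snd).sum = w ∧ ∀ a ∈ l, a.1 ≤ y

/-- `P` is a Pareto frontier (antichain): no pair dominates another. -/
def ParetoAntichain (P : Finset (ℕ × ℕ)) : Prop :=
  ∀ q ∈ P, ∀ q' ∈ P, q.1 ≤ q'.1 → q'.2 ≤ q.2 → q = q'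

/-- The HIS invariant: every achievable (endpoint, weight) is dominated by some
pair in `P`, and every pair in `P` is achievable. -/
def Invariant (P : Finset (ℕ × ℕ)) (items : List (ℕ × ℕ)) : Prop :=
  (∀ y w : ℕ, Ach items y w → ∃ q ∈ P, q.1 ≤ y ∧ w ≤ q.2) ∧
  (∀ q ∈ P, Ach items q.1 q.2)

/-!
An increasing subsequence of `items ++ [(y, w)]` either avoids the new item, and is then
dominated by an old frontier pair, or ends with it, and then its prefix ends strictly below `y`
(the `y`-values are fresh), so by the old invariant it weighs at most `wprev`. Hence the new pair
`(y, wprev + w)` together with the surviving old pairs dominates everything, and the pruning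
only removes pairs that this new pair dominates. The result stays an antichain because the new
pair weighs strictly more than every pair to its left, as `0 < w`.
-/

section Achievable

variable {items : List (ℕ × ℕ)} {y w : ℕ}

theorem Ach.append (h : Ach items y w) (extra : List (ℕ × ℕ)) : Ach (items ++ extra) y w := by
  obtain ⟨l, hsub, hch, hsum, hle⟩ := h
  exact ⟨l, hsub.trans (List.sublist_append_left _ _), hch, hsum, hle⟩

theorem Ach.snoc {y' : ℕ} (h : Ach items y w) (hy : y < y') (w' : ℕ) :
    Ach (items ++ [(y', w')]) y' (w + w') := by
  obtain ⟨l, hsub, hch, rfl, hle⟩ := h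
  refine ⟨l ++ [(y', w')], hsub.append (List.Sublist.refl _), ?_, by simp, ?_⟩
  · refine hch.append (List.isChain_singleton _) fun a ha b hb => ?_
    obtain rfl : b = (y', w') := by simpa using hb.symm
    exact (hle a (List.mem_of_mem_getLast? ha)).trans_lt hy
  · intro a ha
    rcases List.mem_append.mp ha with ha | ha
    · exact (hle a ha).trans hy.le
    · simp [List.mem_singleton.mp ha]

theorem Ach.of_append_singleton {y' w' : ℕ} (h : Ach (items ++ [(y', w')]) y w) :
    Ach items y w ∨ y' ≤ y ∧ ∃ w₀, Ach items y' w₀ ∧ w = w₀ + w' := by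
  have : IsTrans (ℕ × ℕ) (fun a b => a.1 < b.1) := ⟨fun _ _ _ => lt_trans⟩
  obtain ⟨l, hsub, hch, rfl, hle⟩ := h
  obtain ⟨l₁, l₂, rfl, hsub₁, hsub₂⟩ := List.sublist_append_iff.mp hsub
  rcases List.sublist_singleton.mp hsub₂ with rfl | rfl
  · rw [List.append_nil] at hch hle ⊢
    exact Or.inl ⟨l₁, hsub₁, hch, rfl, hle⟩
  · obtain ⟨hch₁, -, hlt⟩ := List.pairwise_append.mp (List.isChain_iff_pairwise.mp hch)
    have hach₁ : Ach items y' (l₁.map Prod.snd).sum :=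
      ⟨l₁, hsub₁, List.isChain_iff_pairwise.mpr hch₁, rfl,
        fun a ha => (hlt a ha _ (List.mem_singleton_self _)).le⟩
    exact Or.inr ⟨hle (y', w') (by simp), _, hach₁, by simp⟩

theorem Ach.exists_lt_of_fresh (h : Ach items y w) (hy : 0 < y)
    (hfresh : ∀ q ∈ items, q.1 ≠ y) : ∃ y₀ < y, Ach items y₀ w := by
  obtain ⟨l, hsub, hch, hsum, hle⟩ := h
  refine ⟨y - 1, by omega, l, hsub, hch, hsum, fun a ha => ?_⟩
  have := hfresh a (hsub.subset ha)
  have := hle a ha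
  omega

end Achievable

/-- The update step of Algorithm HIS. -/
def paretoInsert (P : Finset (ℕ × ℕ)) (y w : ℕ) : Finset (ℕ × ℕ) :=
  insert (y, w) (P.filter fun q => ¬(y < q.1 ∧ q.2 ≤ w))

section ParetoInsert

variable {P : Finset (ℕ × ℕ)} {y w : ℕ}

theorem mem_paretoInsert {q : ℕ × ℕ} :
    q ∈ paretoInsert P y w ↔ q = (y, w) ∨ q ∈ P ∧ ¬(y < q.1 ∧ q.2 ≤ w) := by
  simp only [paretoInsert, Finset.mem_insert, Finset.mem_filter]

theorem exists_mem_paretoInsert_dominating {q : ℕ × ℕ} (hq : q ∈ P) :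
    ∃ q' ∈ paretoInsert P y w, q'.1 ≤ q.1 ∧ q.2 ≤ q'.2 := by
  by_cases hpruned : y < q.1 ∧ q.2 ≤ w
  · exact ⟨(y, w), mem_paretoInsert.mpr (Or.inl rfl), hpruned.1.le, hpruned.2⟩
  · exact ⟨q, mem_paretoInsert.mpr (Or.inr ⟨hq, hpruned⟩), le_rfl, le_rfl⟩

theorem ParetoAntichain.paretoInsert (hP : ParetoAntichain P) (hfresh : ∀ q ∈ P, q.1 ≠ y)
    (hbelow : ∀ q ∈ P, q.1 < y → q.2 < w) : ParetoAntichain (paretoInsert P y w) := by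
  intro q hq q' hq' h₁ h₂
  rcases mem_paretoInsert.mp hq with rfl | ⟨hqP, -⟩ <;>
    rcases mem_paretoInsert.mp hq' with rfl | ⟨hq'P, hq'kept⟩
  · rfl
  · exact absurd ⟨lt_of_le_of_ne h₁ (hfresh q' hq'P).symm, h₂⟩ hq'kept
  · exact absurd h₂ (hbelow q hqP (lt_of_le_of_ne h₁ (hfresh q hqP))).not_ge
  · exact hP q hqP q' hq'P h₁ h₂

end ParetoInsert

section Invariant

variable {P : Finset (ℕ × ℕ)} {items : List (ℕ × ℕ)} {y wprev : ℕ}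

theorem Invariant.le_of_ach (hinv : Invariant P items) (hy : 0 < y)
    (hfresh : ∀ q ∈ items, q.1 ≠ y) (hprev : ∀ q ∈ P, q.1 < y → q.2 ≤ wprev) {w : ℕ}
    (h : Ach items y w) : w ≤ wprev := by
  obtain ⟨y₀, hy₀, h₀⟩ := h.exists_lt_of_fresh hy hfresh
  obtain ⟨q, hq, hqy, hwq⟩ := hinv.1 _ _ h₀
  exact hwq.trans (hprev q hq (hqy.trans_lt hy₀))

theorem Invariant.fst_ne (hinv : Invariant P items) (hP : ParetoAntichain P) (hy : 0 < y)
    (hfresh : ∀ q ∈ items, q.1 ≠ y) {q₀ : ℕ × ℕ} (hq₀ : q₀ ∈ P) (hq₀y : q₀.1 < y)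
    (hprev : ∀ q ∈ P, q.1 < y → q.2 ≤ q₀.2) : ∀ q ∈ P, q.1 ≠ y := by
  intro q hq hqy
  have hw : q.2 ≤ q₀.2 := hinv.le_of_ach hy hfresh hprev (hqy ▸ hinv.2 q hq)
  have := hP q₀ hq₀ q hq (by omega) hw
  subst this
  omega

theorem Invariant.paretoInsert (hinv : Invariant P items) (hy : 0 < y)
    (hfresh : ∀ q ∈ items, q.1 ≠ y) {y₀ : ℕ} (hy₀ : y₀ < y) (hach₀ : Ach items y₀ wprev)
    (hprev : ∀ q ∈ P, q.1 < y → q.2 ≤ wprev) (w : ℕ) :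
    Invariant (paretoInsert P y (wprev + w)) (items ++ [(y, w)]) := by
  refine ⟨fun y' w' h => ?_, fun q hq => ?_⟩
  · rcases h.of_append_singleton with hold | ⟨hyy', w₀, h₀, rfl⟩
    · obtain ⟨q, hq, hqy, hwq⟩ := hinv.1 y' w' hold
      obtain ⟨q', hq', hqy', hwq'⟩ :=
        exists_mem_paretoInsert_dominating (y := y) (w := wprev + w) hq
      exact ⟨q', hq', hqy'.trans hqy, hwq.trans hwq'⟩
    · refine ⟨(y, wprev + w), mem_paretoInsert.mpr (Or.inl rfl), hyy', ?_⟩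
      exact Nat.add_le_add_right (hinv.le_of_ach hy hfresh hprev h₀) w
  · rcases mem_paretoInsert.mp hq with rfl | ⟨hqP, -⟩
    · exact hach₀.snoc hy₀ w
    · exact (hinv.2 q hqP).append _

theorem Invariant.isGreatest_sup (hinv : Invariant P items) (hP : P.Nonempty) :
    IsGreatest {w : ℕ | ∃ y, Ach items y w} (P.sup Prod.snd) := by
  refine ⟨?_, fun w ⟨y, h⟩ => ?_⟩
  · obtain ⟨q, hq, hsup⟩ := Finset.exists_mem_eq_sup P hP Prod.snd
    exact ⟨q.1, hsup ▸ hinv.2 q hq⟩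
  · obtain ⟨q, hq, -, hwq⟩ := hinv.1 y w h
    exact hwq.trans (Finset.le_sup hq)

end Invariant

/-- the set of Pareto-optimal states in the heaviest increasing
subsequence algorithm is an antichain and invariant under the updates: if `P`
is an antichain satisfying the invariant for the items processed so far, and a
new item `(y*, w*)` (with fresh positive `y*`-value and positive weight) is
inserted as `(y*, wprev + w*)` — where `wprev` is the largest weight in `P`
among pairs with `y < y*` — and all pairs `(y', w')` with `y' > y*` and
`w' ≤ wprev + w*` are deleted, then the resulting set is again an antichain
satisfying the invariant, and its maximum weight is the maximum weight of an
increasing subsequence of the items processed so far. -/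
theorem stmt_19 (items : List (ℕ × ℕ)) (P : Finset (ℕ × ℕ))
    (hPinv : Invariant P items) (hPanti : ParetoAntichain P)
    (ystar wstar wprev : ℕ) (hw : 0 < wstar) (hy : 0 < ystar)
    (hfresh : ∀ q ∈ items, q.1 ≠ ystar ∧ 0 < q.1)
    (hprev₁ : ∃ q ∈ P, q.1 < ystar ∧ q.2 = wprev)
    (hprev₂ : ∀ q ∈ P, q.1 < ystar → q.2 ≤ wprev) :
    ParetoAntichain
      (insert (ystar, wprev + wstar)
        (P.filter fun q => ¬(ystar < q.1 ∧ q.2 ≤ wprev + wstar))) ∧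
    Invariant
      (insert (ystar, wprev + wstar)
        (P.filter fun q => ¬(ystar < q.1 ∧ q.2 ≤ wprev + wstar)))
      (items ++ [(ystar, wstar)]) ∧
    IsGreatest {w : ℕ | ∃ y, Ach (items ++ [(ystar, wstar)]) y w}
      ((insert (ystar, wprev + wstar)
        (P.filter fun q => ¬(ystar < q.1 ∧ q.2 ≤ wprev + wstar))).sup
          Prod.snd) := by
  obtain ⟨q₀, hq₀, hq₀y, rfl⟩ := hprev₁
  have hfresh' : ∀ q ∈ items, q.1 ≠ ystar := fun q hq => (hfresh q hq).1
  have hbelow : ∀ q ∈ P, q.1 < ystar → q.2 < q₀.2 + wstar := fun q hq hqy =>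
    (hprev₂ q hq hqy).trans_lt (Nat.lt_add_of_pos_right hw)
  have hinv : Invariant (paretoInsert P ystar (q₀.2 + wstar)) (items ++ [(ystar, wstar)]) :=
    hPinv.paretoInsert hy hfresh' hq₀y (hPinv.2 q₀ hq₀) hprev₂ wstar
  exact ⟨hPanti.paretoInsert (hPinv.fst_ne hPanti hy hfresh' hq₀ hq₀y hprev₂) hbelow, hinv,
    hinv.isGreatest_sup (Finset.insert_nonempty _ _)⟩
end
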